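/- If a graph G has a vertex u that is comparable to some vertex v (u and v non-adjacent with N(u) ⊆ N(v)), then G is an OAT graph if and only if G \ u is an OAT graph. -/

import Mathlib

/-- The disjoint union of two simple graphs. -/
def dUnion {V W : Type} (G : SimpleGraph V) (H : SimpleGraph W) : SimpleGraph (V ⊕ W) :=
  SimpleGraph.fromRel (fun a b =>
    (∃ x y, a = Sum.inl x ∧ b = Sum.inl y ∧ G.Adj x y) ∨
    (∃ x y, a = Sum.inr x ∧ b = Sum.inr y ∧ H.Adj x y))

/-- The join of two simple graphs: all edges between the two sides are added. -/
def joinG {V W : Type} (G : SimpleGraph V) (H : SimpleGraph W) : SimpleGraph (V ⊕ W) :=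
  SimpleGraph.fromRel (fun a b =>
    (∃ x y, a = Sum.inl x ∧ b = Sum.inl y ∧ G.Adj x y) ∨
    (∃ x y, a = Sum.inr x ∧ b = Sum.inr y ∧ H.Adj x y) ∨
    (∃ x y, a = Sum.inl x ∧ b = Sum.inr y))

/-- Adding a new vertex (`none`) whose neighbourhood is the set `X`. When
`X ⊆ N(v)` this is the operation of adding a vertex comparable to `v`. -/
def addComparable {V : Type} (G : SimpleGraph V) (X : Set V) : SimpleGraph (Option V) :=
  SimpleGraph.fromRel (fun a b =>
    (∃ x y, a = some x ∧ b = some y ∧ G.Adj x y) ∨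
    (∃ x, a = none ∧ b = some x ∧ x ∈ X))

/-- Attaching a complete graph on `q` vertices to the vertex `v`: every new
vertex is adjacent to `v` and to every other new vertex. -/
def attachClique {V : Type} (G : SimpleGraph V) (v : V) (q : ℕ) : SimpleGraph (V ⊕ Fin q) :=
  SimpleGraph.fromRel (fun a b =>
    (∃ x y, a = Sum.inl x ∧ b = Sum.inl y ∧ G.Adj x y) ∨
    (∃ i j, a = Sum.inr i ∧ b = Sum.inr j) ∨
    (∃ i, a = Sum.inl v ∧ b = Sum.inr i))

/-- OAT graphs: graphs constructible from single vertices by disjoint union,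
join, adding a comparable vertex, and attaching a clique to a vertex
(up to isomorphism). -/
inductive IsOAT : {V : Type} → SimpleGraph V → Prop
  | single : IsOAT (⊥ : SimpleGraph (Fin 1))
  | dunion {V W : Type} {G : SimpleGraph V} {H : SimpleGraph W} :
      IsOAT G → IsOAT H → IsOAT (dUnion G H)
  | join {V W : Type} {G : SimpleGraph V} {H : SimpleGraph W} :
      IsOAT G → IsOAT H → IsOAT (joinG G H)
  | comparable {V : Type} {G : SimpleGraph V} (v : V) (X : Set V)
      (hX : X ⊆ G.neighborSet v) : IsOAT G → IsOAT (addComparable G X)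
  | clique {V : Type} {G : SimpleGraph V} (v : V) (q : ℕ) (hq : 1 ≤ q) :
      IsOAT G → IsOAT (attachClique G v q)
  | iso {V W : Type} {G : SimpleGraph V} {H : SimpleGraph W} :
      IsOAT G → G ≃g H → IsOAT H

/-!
Deleting a vertex `u` comparable to `v` is undone by adding back a vertex with neighbourhood
`N(u) ⊆ N(v)`, which gives one direction. For the other, induction on the construction shows that
an OAT graph stays OAT after deleting a *removable* vertex: one comparable to some vertex, or an
end of an isolated edge. Isolated edges must be allowed because they appear when the deleted
vertex is comparable to a vertex of an attached clique (and in `K₂ = K₁ ∨ K₁`). In each step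
the deleted vertex is removable in a constituent, where the operation commutes with the deletion;
or it is a twin of the newly added vertex, so that an automorphism swaps the two; or the deletion
leaves a single constituent.
-/

open SimpleGraph

section Adjacency

variable {V W : Type} {G : SimpleGraph V} {H : SimpleGraph W} {X : Set V} {z : V} {q : ℕ}

@[simp] lemma dUnion_adj_inl_inl {x y : V} :
    (dUnion G H).Adj (.inl x) (.inl y) ↔ G.Adj x y := by
  simp [dUnion, G.adj_comm y x]; exact Adj.ne

@[simp] lemma dUnion_adj_inr_inr {x y : W} :
    (dUnion G H).Adj (.inr x) (.inr y) ↔ H.Adj x y := by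
  simp [dUnion, H.adj_comm y x]; exact Adj.ne

@[simp] lemma dUnion_adj_inl_inr {x : V} {y : W} : ¬ (dUnion G H).Adj (.inl x) (.inr y) := by
  simp [dUnion]

@[simp] lemma dUnion_adj_inr_inl {x : W} {y : V} : ¬ (dUnion G H).Adj (.inr x) (.inl y) := by
  simp [dUnion]

@[simp] lemma joinG_adj_inl_inl {x y : V} :
    (joinG G H).Adj (.inl x) (.inl y) ↔ G.Adj x y := by
  simp [joinG, G.adj_comm y x]; exact Adj.ne

@[simp] lemma joinG_adj_inr_inr {x y : W} :
    (joinG G H).Adj (.inr x) (.inr y) ↔ H.Adj x y := by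
  simp [joinG, H.adj_comm y x]; exact Adj.ne

@[simp] lemma joinG_adj_inl_inr {x : V} {y : W} : (joinG G H).Adj (.inl x) (.inr y) := by
  simp [joinG]

@[simp] lemma joinG_adj_inr_inl {x : W} {y : V} : (joinG G H).Adj (.inr x) (.inl y) := by
  simp [joinG]

@[simp] lemma addComparable_adj_some_some {x y : V} :
    (addComparable G X).Adj (some x) (some y) ↔ G.Adj x y := by
  simp [addComparable, G.adj_comm y x]; exact Adj.ne

@[simp] lemma addComparable_adj_none_some {x : V} :
    (addComparable G X).Adj none (some x) ↔ x ∈ X := by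
  simp [addComparable]

@[simp] lemma addComparable_adj_some_none {x : V} :
    (addComparable G X).Adj (some x) none ↔ x ∈ X := by
  simp [addComparable]

@[simp] lemma attachClique_adj_inl_inl {x y : V} :
    (attachClique G z q).Adj (.inl x) (.inl y) ↔ G.Adj x y := by
  simp [attachClique, G.adj_comm y x]; exact Adj.ne

@[simp] lemma attachClique_adj_inr_inr {i j : Fin q} :
    (attachClique G z q).Adj (.inr i) (.inr j) ↔ i ≠ j := by
  simp [attachClique]

@[simp] lemma attachClique_adj_inl_inr {x : V} {i : Fin q} :
    (attachClique G z q).Adj (.inl x) (.inr i) ↔ x = z := by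
  simp [attachClique]

@[simp] lemma attachClique_adj_inr_inl {x : V} {i : Fin q} :
    (attachClique G z q).Adj (.inr i) (.inl x) ↔ x = z := by
  simp [attachClique]

end Adjacency

def Equiv.sumComplInl {V W : Type} (u : V) :
    ({.inl u}ᶜ : Set (V ⊕ W)) ≃ ({u}ᶜ : Set V) ⊕ W :=
  Equiv.subtypeSum.trans <|
    Equiv.sumCongr (Equiv.subtypeEquivRight (by simp)) (Equiv.subtypeUnivEquiv (by simp))

-- The codomain is stated with `≠` to match `finSuccAboveEquiv`.
def Equiv.sumComplInr {V W : Type} (u : W) :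
    ({.inr u}ᶜ : Set (V ⊕ W)) ≃ V ⊕ {x // x ≠ u} :=
  Equiv.subtypeSum.trans <|
    Equiv.sumCongr (Equiv.subtypeUnivEquiv (by simp)) (Equiv.subtypeEquivRight (by simp))

def Equiv.optionComplNone (V : Type) : ({none}ᶜ : Set (Option V)) ≃ V :=
  (Equiv.subtypeEquivRight fun _ => Option.ne_none_iff_isSome).trans (Equiv.optionIsSomeEquiv V)

def Equiv.optionComplSome {V : Type} (u : V) :
    ({some u}ᶜ : Set (Option V)) ≃ Option ({u}ᶜ : Set V) where
  toFun
    | ⟨none, _⟩ => none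
    | ⟨some x, h⟩ => some ⟨x, fun hx => h (congrArg some hx)⟩
  invFun
    | none => ⟨none, by simp⟩
    | some x => ⟨some x, fun h => x.2 (Option.some_inj.mp h)⟩
  left_inv := by rintro ⟨_ | x, h⟩ <;> rfl
  right_inv := by rintro (_ | x) <;> rfl

namespace SimpleGraph

variable {V W : Type} {G : SimpleGraph V} {H : SimpleGraph W} {u v w z : V}

def IsComparable (G : SimpleGraph V) (u v : V) : Prop :=
  v ≠ u ∧ ¬ G.Adj u v ∧ G.neighborSet u ⊆ G.neighborSet v

def IsIsolatedEdge (G : SimpleGraph V) (u w : V) : Prop :=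
  G.neighborSet u = {w} ∧ G.neighborSet w = {u}

def IsRemovable (G : SimpleGraph V) (u : V) : Prop :=
  (∃ v, G.IsComparable u v) ∨ ∃ w, G.IsIsolatedEdge u w

lemma IsIsolatedEdge.adj (h : G.IsIsolatedEdge u w) : G.Adj u w := by
  simpa using h.1.ge rfl

lemma IsComparable.comap (f : G ↪g H) (h : H.IsComparable (f u) (f v)) : G.IsComparable u v :=
  ⟨fun hvu => h.1 (congrArg f hvu), fun hadj => h.2.1 (f.map_adj_iff.mpr hadj),
    fun _ hx => f.map_adj_iff.mp (h.2.2 (f.map_adj_iff.mpr hx))⟩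

lemma IsIsolatedEdge.comap (f : G ↪g H) (h : H.IsIsolatedEdge (f u) (f w)) :
    G.IsIsolatedEdge u w := by
  have key : ∀ {a b}, H.neighborSet (f a) = {f b} → G.neighborSet a = {b} := fun hab => by
    ext x
    rw [mem_neighborSet, ← f.map_adj_iff, ← mem_neighborSet, hab, Set.mem_singleton_iff,
      f.injective.eq_iff, Set.mem_singleton_iff]
  exact ⟨key h.1, key h.2⟩

lemma IsRemovable.map (e : G ≃g H) (h : G.IsRemovable u) : H.IsRemovable (e u) := by
  have hsymm : ∀ x, e.symm.toEmbedding (e x) = x := e.symm_apply_apply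
  rcases h with ⟨v, hv⟩ | ⟨w, hw⟩
  · exact .inl ⟨e v, .comap e.symm.toEmbedding (by rwa [hsymm, hsymm])⟩
  · exact .inr ⟨e w, .comap e.symm.toEmbedding (by rwa [hsymm, hsymm])⟩

lemma isComparable_of_forall_not_adj (hu : ∀ x, ¬ G.Adj u x) (hv : v ≠ u) :
    G.IsComparable u v :=
  ⟨hv, hu v, fun _ hx => absurd hx (hu _)⟩

lemma isRemovable_of_neighborSet_subset_singleton (hz : z ≠ u) (h : G.neighborSet u ⊆ {z}) :
    G.IsRemovable u := by
  by_cases huz : G.Adj u z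
  · have hNu : G.neighborSet u = {z} := h.antisymm (Set.singleton_subset_iff.mpr huz)
    by_cases hx : ∃ x, x ≠ u ∧ G.Adj z x
    · obtain ⟨x, hxu, hzx⟩ := hx
      refine .inl ⟨x, hxu, fun hux => hzx.ne' (h hux), ?_⟩
      rw [hNu, Set.singleton_subset_iff]
      exact hzx.symm
    · push Not at hx
      refine .inr ⟨z, hNu, Set.eq_singleton_iff_unique_mem.mpr ⟨huz.symm, fun x hx' => ?_⟩⟩
      by_contra hxu
      exact hx x hxu hx'
  · exact .inl ⟨z, hz, huz, fun x hx => absurd (h hx ▸ hx) huz⟩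

def Iso.induceComplSingleton (e : G ≃g H) {u : V} {u' : W} (h : e u = u') :
    G.induce {u}ᶜ ≃g H.induce {u'}ᶜ :=
  e.induce <| by
    have himage : e '' {u}ᶜ = {u'}ᶜ := by
      rw [Set.image_compl_eq e.bijective, Set.image_singleton, h]
    exact himage ▸ e.injective.bijOn_image

open scoped Classical in
noncomputable def Iso.swapOfTwins {a b : V}
    (h : ∀ x, x ≠ a → x ≠ b → (G.Adj a x ↔ G.Adj b x)) : G ≃g G where
  toEquiv := Equiv.swap a b
  map_rel_iff' {x y} := by
    simp only [Equiv.swap_apply_def]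
    split_ifs <;> grind [G.adj_comm, G.irrefl]

open scoped Classical in
noncomputable def induceComplIsoOfTwins {a b : V}
    (h : ∀ x, x ≠ a → x ≠ b → (G.Adj a x ↔ G.Adj b x)) :
    G.induce {a}ᶜ ≃g G.induce {b}ᶜ :=
  (Iso.swapOfTwins h).induceComplSingleton (Equiv.swap_apply_left a b)

end SimpleGraph

section Operations

variable {V W : Type} {G : SimpleGraph V} {H : SimpleGraph W} {X : Set V} {z : V} {q : ℕ}

def dUnionEmbeddingInl : G ↪g dUnion G H := ⟨Function.Embedding.inl, dUnion_adj_inl_inl⟩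

def joinGEmbeddingInl : G ↪g joinG G H := ⟨Function.Embedding.inl, joinG_adj_inl_inl⟩

def addComparableEmbeddingSome : G ↪g addComparable G X :=
  ⟨Function.Embedding.some, addComparable_adj_some_some⟩

def attachCliqueEmbeddingInl : G ↪g attachClique G z q :=
  ⟨Function.Embedding.inl, attachClique_adj_inl_inl⟩

def dUnionComm : dUnion G H ≃g dUnion H G :=
  ⟨Equiv.sumComm V W, by rintro (a | a) (b | b) <;> simp⟩

def joinGComm : joinG G H ≃g joinG H G :=
  ⟨Equiv.sumComm V W, by rintro (a | a) (b | b) <;> simp⟩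

def dUnionIsoOfIsEmpty [IsEmpty V] : dUnion G H ≃g H :=
  ⟨Equiv.emptySum V W, by
    rintro (a | a) (b | b) <;> first | exact isEmptyElim a | exact isEmptyElim b | simp⟩

def joinGIsoOfIsEmpty [IsEmpty V] : joinG G H ≃g H :=
  ⟨Equiv.emptySum V W, by
    rintro (a | a) (b | b) <;> first | exact isEmptyElim a | exact isEmptyElim b | simp⟩

def attachCliqueZeroIso : attachClique G z 0 ≃g G :=
  ⟨Equiv.sumEmpty V (Fin 0), by
    rintro (a | a) (b | b) <;> first | exact isEmptyElim a | exact isEmptyElim b | simp⟩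

def dUnionInduceComplInl (u : V) :
    (dUnion G H).induce {.inl u}ᶜ ≃g dUnion (G.induce {u}ᶜ) H :=
  ⟨Equiv.sumComplInl u, by
    rintro ⟨a | a, ha⟩ ⟨b | b, hb⟩ <;> simp [Equiv.sumComplInl, Equiv.subtypeSum]⟩

def joinGInduceComplInl (u : V) :
    (joinG G H).induce {.inl u}ᶜ ≃g joinG (G.induce {u}ᶜ) H :=
  ⟨Equiv.sumComplInl u, by
    rintro ⟨a | a, ha⟩ ⟨b | b, hb⟩ <;> simp [Equiv.sumComplInl, Equiv.subtypeSum]⟩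

def attachCliqueInduceComplInl {u : V} (hz : z ≠ u) :
    (attachClique G z q).induce {.inl u}ᶜ ≃g attachClique (G.induce {u}ᶜ) ⟨z, hz⟩ q :=
  ⟨Equiv.sumComplInl u, by
    rintro ⟨a | a, ha⟩ ⟨b | b, hb⟩ <;>
      simp [Equiv.sumComplInl, Equiv.subtypeSum, Subtype.ext_iff]⟩

def attachCliqueInduceComplInr (i : Fin (q + 1)) :
    (attachClique G z (q + 1)).induce {.inr i}ᶜ ≃g attachClique G z q :=
  ⟨(Equiv.sumComplInr i).trans (Equiv.sumCongr (.refl V) (finSuccAboveEquiv i).symm), by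
    rintro ⟨a | a, ha⟩ ⟨b | b, hb⟩ <;>
      simp [Equiv.sumComplInr, Equiv.subtypeSum, Equiv.sumCongr_apply, Subtype.ext_iff]⟩

def addComparableInduceComplNone : (addComparable G X).induce {none}ᶜ ≃g G :=
  ⟨Equiv.optionComplNone V, by
    rintro ⟨_ | a, ha⟩ ⟨_ | b, hb⟩
    exacts [absurd rfl ha, absurd rfl ha, absurd rfl hb, addComparable_adj_some_some.symm]⟩

def addComparableInduceComplSome (u : V) :
    (addComparable G X).induce {some u}ᶜ ≃g addComparable (G.induce {u}ᶜ) {x | ↑x ∈ X} :=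
  ⟨Equiv.optionComplSome u, by
    rintro ⟨_ | a, ha⟩ ⟨_ | b, hb⟩ <;> simp [Equiv.optionComplSome]⟩

open scoped Classical in
noncomputable def addComparableInduceComplIso (G : SimpleGraph V) (u : V) :
    addComparable (G.induce {u}ᶜ) {x | G.Adj u x} ≃g G :=
  ⟨Equiv.optionSubtypeNe u, by
    rintro (_ | ⟨a, ha⟩) (_ | ⟨b, hb⟩) <;> simp <;> first | rfl | exact G.adj_comm _ _⟩

end Operations

section Removal

variable {V W : Type} {G : SimpleGraph V} {H : SimpleGraph W} {X : Set V} {z : V} {q : ℕ}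

def RemovalClosed (G : SimpleGraph V) : Prop :=
  ∀ u, G.IsRemovable u → IsOAT (G.induce {u}ᶜ)

lemma RemovalClosed.of_iso (e : G ≃g H) (hG : RemovalClosed G) : RemovalClosed H := fun u hu =>
  (hG _ (hu.map e.symm)).iso (e.induceComplSingleton (e.apply_symm_apply u))

lemma isOAT_attachClique (hG : IsOAT G) (z : V) : ∀ q, IsOAT (attachClique G z q)
  | 0 => hG.iso attachCliqueZeroIso.symm
  | q + 1 => hG.clique z (q + 1) q.succ_pos

lemma isOAT_dUnion_induceCompl_inl (hH : IsOAT H) (hG : RemovalClosed G) {u : V}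
    (hu : (dUnion G H).IsRemovable (.inl u)) : IsOAT ((dUnion G H).induce {.inl u}ᶜ) := by
  refine IsOAT.iso ?_ (dUnionInduceComplInl u).symm
  suffices G.IsRemovable u ∨ ∀ x, x = u by
    rcases this with hu | hV
    · exact (hG u hu).dunion hH
    · have : IsEmpty ({u}ᶜ : Set V) := ⟨fun x => x.2 (hV x)⟩
      exact hH.iso dUnionIsoOfIsEmpty.symm
  rcases hu with ⟨v | v, hv⟩ | ⟨w | w, hw⟩
  · exact .inl (.inl ⟨v, hv.comap dUnionEmbeddingInl⟩)
  · have hiso : ∀ x, ¬ G.Adj u x := fun x hx =>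
      dUnion_adj_inr_inl (hv.2.2 (dUnion_adj_inl_inl.mpr hx))
    by_cases hV : ∀ x, x = u
    · exact .inr hV
    · push Not at hV
      obtain ⟨x, hx⟩ := hV
      exact .inl (.inl ⟨x, isComparable_of_forall_not_adj hiso hx⟩)
  · exact .inl (.inr ⟨w, hw.comap dUnionEmbeddingInl⟩)
  · exact absurd hw.adj dUnion_adj_inl_inr

lemma isOAT_joinG_induceCompl_inl (hH : IsOAT H) (hG : RemovalClosed G) {u : V}
    (hu : (joinG G H).IsRemovable (.inl u)) : IsOAT ((joinG G H).induce {.inl u}ᶜ) := by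
  refine IsOAT.iso ?_ (joinGInduceComplInl u).symm
  suffices G.IsRemovable u ∨ ∀ x, x = u by
    rcases this with hu | hV
    · exact (hG u hu).join hH
    · have : IsEmpty ({u}ᶜ : Set V) := ⟨fun x => x.2 (hV x)⟩
      exact hH.iso joinGIsoOfIsEmpty.symm
  rcases hu with ⟨v | v, hv⟩ | ⟨w | w, hw⟩
  · exact .inl (.inl ⟨v, hv.comap joinGEmbeddingInl⟩)
  · exact absurd joinG_adj_inl_inr hv.2.1
  · exact .inl (.inr ⟨w, hw.comap joinGEmbeddingInl⟩)
  · refine .inr fun x => Sum.inl_injective (β := W) ?_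
    have hx : Sum.inl x ∈ (joinG G H).neighborSet (.inr w) := joinG_adj_inr_inl
    rwa [hw.2] at hx

lemma removalClosed_dUnion (hG : IsOAT G) (hH : IsOAT H) (ihG : RemovalClosed G)
    (ihH : RemovalClosed H) : RemovalClosed (dUnion G H)
  | .inl _, hu => isOAT_dUnion_induceCompl_inl hH ihG hu
  | .inr _, hu => (isOAT_dUnion_induceCompl_inl hG ihH (hu.map dUnionComm)).iso
      (dUnionComm.symm.induceComplSingleton rfl)

lemma removalClosed_joinG (hG : IsOAT G) (hH : IsOAT H) (ihG : RemovalClosed G)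
    (ihH : RemovalClosed H) : RemovalClosed (joinG G H)
  | .inl _, hu => isOAT_joinG_induceCompl_inl hH ihG hu
  | .inr _, hu => (isOAT_joinG_induceCompl_inl hG ihH (hu.map joinGComm)).iso
      (joinGComm.symm.induceComplSingleton rfl)

-- The new vertex keeps `z` as its partner unless `z` is the deleted vertex.
lemma isOAT_addComparable_induceCompl_some (hX : X ⊆ G.neighborSet z) (ih : RemovalClosed G)
    {u : V} (hu : G.IsRemovable u) (hpartner : z = u → ∃ w ≠ u, X ⊆ G.neighborSet w) :
    IsOAT ((addComparable G X).induce {some u}ᶜ) := by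
  obtain ⟨w, hwu, hwX⟩ : ∃ w ≠ u, X ⊆ G.neighborSet w := by
    by_cases hzu : z = u
    exacts [hpartner hzu, ⟨z, hzu, hX⟩]
  exact ((ih u hu).comparable (⟨w, hwu⟩ : ({u}ᶜ : Set V)) _ fun _ hx => hwX hx).iso
    (addComparableInduceComplSome u).symm

lemma isOAT_addComparable_induceCompl_some_of_twin {u : V} (hG : IsOAT G)
    (htwin : ∀ x, x ≠ u → (x ∈ X ↔ G.Adj u x)) :
    IsOAT ((addComparable G X).induce {some u}ᶜ) := by
  refine (hG.iso addComparableInduceComplNone.symm).iso (induceComplIsoOfTwins ?_)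
  rintro (_ | x) hx hxu
  · exact absurd rfl hx
  · simpa using htwin x (by simpa using hxu)

lemma removalClosed_addComparable (hX : X ⊆ G.neighborSet z) (hG : IsOAT G)
    (ih : RemovalClosed G) : RemovalClosed (addComparable G X)
  | none, _ => hG.iso addComparableInduceComplNone.symm
  | some u, hu => by
    have of_removable := isOAT_addComparable_induceCompl_some hX ih (u := u)
    rcases hu with ⟨_ | v, hv⟩ | ⟨_ | w, hw⟩
    · have hNX : G.neighborSet u ⊆ X := fun x hx => by
        simpa using hv.2.2 (addComparable_adj_some_some.mpr hx)
      by_cases hzu : z = u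
      · subst hzu
        exact isOAT_addComparable_induceCompl_some_of_twin hG fun x _ => ⟨(hX ·), (hNX ·)⟩
      · have hzu' : ¬ G.Adj u z := fun h => G.irrefl (hX (hNX h))
        exact of_removable (.inl ⟨z, hzu, hzu', hNX.trans hX⟩) (absurd · hzu)
    · have hv' := hv.comap addComparableEmbeddingSome
      exact of_removable (.inl ⟨v, hv'⟩) fun hzu => ⟨v, hv'.1, (hzu ▸ hX).trans hv'.2.2⟩
    · refine isOAT_addComparable_induceCompl_some_of_twin hG fun x hxu =>
        ⟨fun hx => ?_, fun hx => ?_⟩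
      · have h : some x ∈ (addComparable G X).neighborSet none :=
          addComparable_adj_none_some.mpr hx
        rw [hw.2, Set.mem_singleton_iff, Option.some_inj] at h
        exact absurd h hxu
      · have h : some x ∈ (addComparable G X).neighborSet (some u) :=
          addComparable_adj_some_some.mpr hx
        rw [hw.1, Set.mem_singleton_iff] at h
        exact absurd h (Option.some_ne_none x)
    · have hw' := hw.comap addComparableEmbeddingSome
      refine of_removable (.inr ⟨w, hw'⟩) fun hzu =>
        ⟨w, hw'.adj.ne', fun x hx => absurd ?_ (Option.some_ne_none u)⟩
      have hxw : x = w := by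
        rw [← Set.mem_singleton_iff, ← hw'.1, ← hzu]
        exact hX hx
      have h : none ∈ (addComparable G X).neighborSet (some w) :=
        addComparable_adj_some_none.mpr (hxw ▸ hx)
      rwa [hw.2, Set.mem_singleton_iff, eq_comm] at h

lemma isOAT_attachClique_induceCompl_inl_self (hq : 1 ≤ q) (hG : IsOAT G)
    (hz : (attachClique G z q).IsRemovable (.inl z)) :
    IsOAT ((attachClique G z q).induce {.inl z}ᶜ) := by
  obtain ⟨q, rfl⟩ : ∃ q', q = q' + 1 := ⟨q - 1, by omega⟩
  have hadj : ∀ i, (attachClique G z (q + 1)).Adj (.inl z) (.inr i) := fun _ =>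
    attachClique_adj_inl_inr.mpr rfl
  rcases hz with ⟨v | j, hv⟩ | ⟨w, hw⟩
  · exact absurd (congrArg Sum.inl (attachClique_adj_inl_inr.mp (hv.2.2 (hadj 0)))) hv.1
  · exact absurd (hadj j) hv.2.1
  -- So `z` is one end of an isolated edge: `q = 1`, `z` is isolated in `G`, and `inl z`, `inr 0`
  -- are twins.
  have hw0 : ∀ i, Sum.inr i = w := fun i => by
    have h : Sum.inr i ∈ (attachClique G z (q + 1)).neighborSet (.inl z) := hadj i
    rwa [hw.1] at h
  obtain rfl : 0 = q := by
    simpa [Fin.ext_iff] using Sum.inr_injective ((hw0 0).trans (hw0 (Fin.last q)).symm)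
  have hzx : ∀ x, ¬ G.Adj z x := fun x hx => by
    have h : Sum.inl x ∈ (attachClique G z 1).neighborSet (.inl z) :=
      attachClique_adj_inl_inl.mpr hx
    rw [hw.1, ← hw0 0, Set.mem_singleton_iff] at h
    exact Sum.inl_ne_inr h
  refine ((hG.iso attachCliqueZeroIso.symm).iso (attachCliqueInduceComplInr 0).symm).iso
    (induceComplIsoOfTwins ?_)
  rintro (x | j) hx0 hxz
  · simpa [hzx x] using fun h => hxz (congrArg Sum.inl h)
  · exact absurd (congrArg Sum.inr (Fin.fin_one_eq_zero j)) hx0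

lemma removalClosed_attachClique (hq : 1 ≤ q) (hG : IsOAT G) (ih : RemovalClosed G) :
    RemovalClosed (attachClique G z q)
  | .inr i, _ => by
    obtain ⟨q, rfl⟩ : ∃ q', q = q' + 1 := ⟨q - 1, by omega⟩
    exact (isOAT_attachClique hG z q).iso (attachCliqueInduceComplInr i).symm
  | .inl u, hu => by
    by_cases hzu : z = u
    · subst hzu
      exact isOAT_attachClique_induceCompl_inl_self hq hG hu
    refine ((ih u ?_).clique ⟨z, hzu⟩ q hq).iso (attachCliqueInduceComplInl hzu).symm
    rcases hu with ⟨v | j, hv⟩ | ⟨w | j, hw⟩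
    · exact .inl ⟨v, hv.comap attachCliqueEmbeddingInl⟩
    · exact isRemovable_of_neighborSet_subset_singleton hzu fun x hx => by
        simpa using hv.2.2 (attachClique_adj_inl_inl.mpr hx)
    · exact .inr ⟨w, hw.comap attachCliqueEmbeddingInl⟩
    · exact absurd (attachClique_adj_inl_inr.mp hw.adj).symm hzu

theorem IsOAT.removalClosed (h : IsOAT G) : RemovalClosed G := by
  induction h with
  | single =>
    rintro u (⟨v, hv⟩ | ⟨w, hw⟩)
    exacts [absurd (Subsingleton.elim v u) hv.1, absurd (Subsingleton.elim u w) hw.adj.ne]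
  | dunion hG hH ihG ihH => exact removalClosed_dUnion hG hH ihG ihH
  | join hG hH ihG ihH => exact removalClosed_joinG hG hH ihG ihH
  | comparable z X hX hG ih => exact removalClosed_addComparable hX hG ih
  | clique z q hq hG ih => exact removalClosed_attachClique hq hG ih
  | iso _ e ih => exact ih.of_iso e

end Removal

theorem stmt11_general {V : Type} (G : SimpleGraph V) (u v : V) (huv : u ≠ v)
    (hadj : ¬ G.Adj u v) (hsub : G.neighborSet u ⊆ G.neighborSet v) :
    IsOAT G ↔ IsOAT (G.induce {u}ᶜ) := by
  constructor
  · exact fun h => h.removalClosed u (.inl ⟨v, huv.symm, hadj, hsub⟩)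
  · intro h
    have hv : v ∈ ({u}ᶜ : Set V) := huv.symm
    exact (h.comparable (⟨v, hv⟩ : ({u}ᶜ : Set V)) {x | G.Adj u x} fun _ hx => hsub hx).iso
      (addComparableInduceComplIso G u)

/-- If `u` is comparable to `v` in `G` (non-adjacent, `N(u) ⊆ N(v)`), then `G` is OAT iff
`G \ u` is OAT. -/
theorem stmt11 {V : Type} [Fintype V] (G : SimpleGraph V) (u v : V) (huv : u ≠ v)
    (hadj : ¬ G.Adj u v) (hsub : G.neighborSet u ⊆ G.neighborSet v) :
    IsOAT G ↔ IsOAT (G.induce {u}ᶜ) :=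
  stmt11_general G u v huv hadj hsub
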